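/- arXiv:1710.01242 — 3 statements merged into one kernel-verified Lean document; each statement's English description precedes it below -/
import Mathlib

section
/- Let F : S¹ × [0,T) → ℝ² be a family of curves satisfying ∂²F/∂t² = k⁻¹ ν − ∇ρ, where ∇ρ := ⟨∂²F/∂s∂t, ∂F/∂t⟩ T, with initial velocity ∂F/∂t(·,0) = f(u) ν₀ purely normal. Then ⟨∂F/∂t, ∂F/∂u⟩ = 0 for all t ∈ [0,T), i.e., the flow is a normal flow. -/
open scoped RealInnerProductSpace

/-- The hyperbolic inverse curvature flow `F_tt = k⁻¹ ν - ∇ρ` in the plane, with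
`∇ρ = ⟨F_st, F_t⟩ T` (`T = F_u/‖F_u‖` the unit tangent, `∂/∂s = ‖F_u‖⁻¹ ∂/∂u`),
and purely normal initial velocity `F_t(·,0) = f ν(·,0)`, is a normal flow:
`⟨F_t, F_u⟩ = 0` for all `t ∈ [0,T)`. -/
theorem stmt_8 (Tend : ℝ) (hTend : 0 < Tend)
    (F ν T : ℝ → ℝ → EuclideanSpace ℝ (Fin 2))
    (k : ℝ → ℝ → ℝ) (f : ℝ → ℝ)
    (hF : ContDiff ℝ (⊤ : ℕ∞) (fun p : ℝ × ℝ => F p.1 p.2))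
    (Ft Fu Ftt Ftu : ℝ → ℝ → EuclideanSpace ℝ (Fin 2))
    (hFt : ∀ u t, Ft u t = deriv (fun s => F u s) t)
    (hFu : ∀ u t, Fu u t = deriv (fun x => F x t) u)
    (hFtt : ∀ u t, Ftt u t = deriv (fun s => Ft u s) t)
    (hFtu : ∀ u t, Ftu u t = deriv (fun x => Ft x t) u)
    (hreg : ∀ u : ℝ, ∀ t ∈ Set.Ico (0 : ℝ) Tend, Fu u t ≠ 0)
    (hT : ∀ u t, T u t = (‖Fu u t‖)⁻¹ • Fu u t)
    (hν : ∀ u t, (inner ℝ (ν u t) (Fu u t) : ℝ) = 0)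
    (hflow : ∀ u : ℝ, ∀ t ∈ Set.Ico (0 : ℝ) Tend,
      Ftt u t = (k u t)⁻¹ • ν u t -
        (inner ℝ ((‖Fu u t‖)⁻¹ • Ftu u t) (Ft u t) : ℝ) • T u t)
    (hinit : ∀ u : ℝ, Ft u 0 = f u • ν u 0) :
    ∀ u : ℝ, ∀ t ∈ Set.Ico (0 : ℝ) Tend, (inner ℝ (Ft u t) (Fu u t) : ℝ) = 0 := by
  set G : ℝ × ℝ → EuclideanSpace ℝ (Fin 2) := fun p => F p.1 p.2 with hG
  have hGdiff : Differentiable ℝ G := hF.differentiable (by simp)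
  have hG2 : ContDiff ℝ (⊤ : ℕ∞) (fun p => fderiv ℝ G p) := hF.fderiv_right (by simp)
  have hG2diff : Differentiable ℝ (fun p => fderiv ℝ G p) := hG2.differentiable (by simp)
  -- lines
  have lineT : ∀ u t : ℝ, HasDerivAt (fun s : ℝ => (u, s)) ((0:ℝ), (1:ℝ)) t :=
    fun u t => (hasDerivAt_const t u).prodMk (hasDerivAt_id t)
  have lineU : ∀ u t : ℝ, HasDerivAt (fun x : ℝ => (x, t)) ((1:ℝ), (0:ℝ)) u :=
    fun u t => (hasDerivAt_id u).prodMk (hasDerivAt_const u t)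
  -- first derivatives
  have hFt' : ∀ u t : ℝ, HasDerivAt (fun s => F u s) (fderiv ℝ G (u, t) (0, 1)) t :=
    fun u t => (hGdiff (u, t)).hasFDerivAt.comp_hasDerivAt t (lineT u t)
  have hFu' : ∀ u t : ℝ, HasDerivAt (fun x => F x t) (fderiv ℝ G (u, t) (1, 0)) u :=
    fun u t => by have := (hGdiff (u, t)).hasFDerivAt.comp_hasDerivAt u (lineU u t); exact this
  have hFtE : ∀ u t : ℝ, Ft u t = fderiv ℝ G (u, t) (0, 1) := fun u t => by
    rw [hFt]; exact (hFt' u t).deriv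
  have hFuE : ∀ u t : ℝ, Fu u t = fderiv ℝ G (u, t) (1, 0) := fun u t => by
    rw [hFu]; exact (hFu' u t).deriv
  -- evaluation CLM
  have ev : ∀ (v : ℝ × ℝ) (u t : ℝ),
      HasDerivAt (fun s : ℝ => fderiv ℝ G (u, s) v)
        (fderiv ℝ (fun p => fderiv ℝ G p) (u, t) (0, 1) v) t := by
    intro v u t
    have h1 : HasDerivAt (fun s : ℝ => fderiv ℝ G (u, s))
        (fderiv ℝ (fun p => fderiv ℝ G p) (u, t) (0, 1)) t :=
      (hG2diff (u, t)).hasFDerivAt.comp_hasDerivAt t (lineT u t)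
    exact ((ContinuousLinearMap.apply ℝ (EuclideanSpace ℝ (Fin 2)) v).hasFDerivAt.comp_hasDerivAt t h1)
  have evU : ∀ (v : ℝ × ℝ) (u t : ℝ),
      HasDerivAt (fun x : ℝ => fderiv ℝ G (x, t) v)
        (fderiv ℝ (fun p => fderiv ℝ G p) (u, t) (1, 0) v) u := by
    intro v u t
    have h1 : HasDerivAt (fun x : ℝ => fderiv ℝ G (x, t))
        (fderiv ℝ (fun p => fderiv ℝ G p) (u, t) (1, 0)) u :=
      (hG2diff (u, t)).hasFDerivAt.comp_hasDerivAt u (lineU u t)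
    exact ((ContinuousLinearMap.apply ℝ (EuclideanSpace ℝ (Fin 2)) v).hasFDerivAt.comp_hasDerivAt u h1)
  -- symmetry of second derivative
  have hsymm : ∀ u t : ℝ, fderiv ℝ (fun p => fderiv ℝ G p) (u, t) (0, 1) (1, 0)
      = fderiv ℝ (fun p => fderiv ℝ G p) (u, t) (1, 0) (0, 1) := fun u t =>
    (hF.contDiffAt.isSymmSndFDerivAt ((by rw [minSmoothness_of_isRCLikeNormedField]; exact WithTop.coe_le_coe.mpr le_top))) _ _
  -- Ftu in terms of snd fderiv
  have hFtuE : ∀ u t : ℝ, Ftu u t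
      = fderiv ℝ (fun p => fderiv ℝ G p) (u, t) (1, 0) (0, 1) := by
    intro u t
    rw [hFtu]
    have : (fun x => Ft x t) = fun x => fderiv ℝ G (x, t) (0, 1) := funext fun x => hFtE x t
    rw [this]
    exact (evU (0, 1) u t).deriv
  -- HasDerivAt of t ↦ Ft u t with value Ftt u t
  have hFttD : ∀ u t : ℝ, HasDerivAt (fun s => Ft u s) (Ftt u t) t := by
    intro u t
    have h1 : (fun s => Ft u s) = fun s => fderiv ℝ G (u, s) (0, 1) :=
      funext fun s => hFtE u s
    have h2 := ev (0, 1) u t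
    rw [← h1] at h2
    have : Ftt u t = fderiv ℝ (fun p => fderiv ℝ G p) (u, t) (0, 1) (0, 1) := by
      rw [hFtt]; exact h2.deriv
    rw [this]; exact h2
  -- HasDerivAt of t ↦ Fu u t with value Ftu u t
  have hFutD : ∀ u t : ℝ, HasDerivAt (fun s => Fu u s) (Ftu u t) t := by
    intro u t
    have h1 : (fun s => Fu u s) = fun s => fderiv ℝ G (u, s) (1, 0) :=
      funext fun s => hFuE u s
    have h2 := ev (1, 0) u t
    rw [← h1] at h2
    rw [hFtuE, ← hsymm]
    exact h2
  intro u t ht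
  -- the scalar function
  set g : ℝ → ℝ := fun s => (inner ℝ (Ft u s) (Fu u s) : ℝ) with hg
  have hgD : ∀ s : ℝ, HasDerivAt g
      ((inner ℝ (Ft u s) (Ftu u s) : ℝ) + (inner ℝ (Ftt u s) (Fu u s) : ℝ)) s :=
    fun s => HasDerivAt.inner ℝ (hFttD u s) (hFutD u s)
  have hg0 : g 0 = 0 := by
    simp only [hg, hinit u, real_inner_smul_left]
    rw [hν u 0, mul_zero]
  have hderiv0 : ∀ s ∈ Set.Ico (0:ℝ) Tend,
      (inner ℝ (Ft u s) (Ftu u s) : ℝ) + (inner ℝ (Ftt u s) (Fu u s) : ℝ) = 0 := by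
    intro s hs
    have hne : Fu u s ≠ 0 := hreg u s hs
    have hnorm : ‖Fu u s‖ ≠ 0 := norm_ne_zero_iff.mpr hne
    rw [hflow u s hs, hT]
    rw [inner_sub_left, real_inner_smul_left, real_inner_smul_left,
      real_inner_smul_left, hν u s, real_inner_smul_left,
      real_inner_self_eq_norm_sq, real_inner_comm (Ft u s)]
    field_simp
    ring
  -- g is constant 0 on [0, t]
  rcases eq_or_lt_of_le ht.1 with h0 | h0
  · rw [hg] at hg0; rw [← h0]; exact hg0
  · have hc : ∀ x ∈ Set.Icc (0:ℝ) t, g x = g 0 := by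
      apply constant_of_has_deriv_right_zero
      · exact fun x _ => (hgD x).continuousAt.continuousWithinAt
      · intro x hx
        have hx' : x ∈ Set.Ico (0:ℝ) Tend := ⟨hx.1, lt_trans hx.2 ht.2⟩
        have := (hgD x).hasDerivWithinAt (s := Set.Ici x)
        rwa [hderiv0 x hx'] at this
    have := hc t ⟨ht.1, le_refl t⟩
    rw [hg0] at this
    exact this
end

section
/- Let S₁, S₂ be two solutions of the support-function equation S_{tt} = k S_{θt}² + k⁻¹ with k_i = (S_i + S_{i,θθ})⁻¹ > 0. Then the difference ω = S₂ − S₁ satisfies the linear hyperbolic equation ω_{tt} = k₁k₂(1/(k₁k₂) − S_{1θt} S_{2θt}) ω_{θθ} + (k₁ S_{1θt} + k₂ S_{2θt}) ω_{θt} + k₁k₂(1/(k₁k₂) − S_{1θt} S_{2θt}) ω, and the discriminant of this operator satisfies b² − ac = (1/4)(k₁ S_{1θt} − k₂ S_{2θt})² + 1 > 0, where a = k₁k₂(1/(k₁k₂) − S_{1θt}S_{2θt}), b = (1/2)(k₁S_{1θt} + k₂S_{2θt}), c = −1. -/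
/-- Partial derivative in the first (angle) variable. -/
noncomputable def pθ (f : ℝ → ℝ → ℝ) : ℝ → ℝ → ℝ := fun θ t => deriv (fun a => f a t) θ

/-- Partial derivative in the second (time) variable. -/
noncomputable def pt (f : ℝ → ℝ → ℝ) : ℝ → ℝ → ℝ := fun θ t => deriv (fun b => f θ b) t

lemma hasDerivAt_slice_t (f : ℝ → ℝ → ℝ) (hf : ContDiff ℝ (⊤ : ℕ∞) (fun p : ℝ × ℝ => f p.1 p.2))
    (θ t : ℝ) :
    HasDerivAt (fun b => f θ b) (fderiv ℝ (fun p : ℝ × ℝ => f p.1 p.2) (θ, t) (0, 1)) t := by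
  have h1 : HasDerivAt (fun b : ℝ => ((θ, b) : ℝ × ℝ)) (0, 1) t :=
    (hasDerivAt_const t θ).prodMk (hasDerivAt_id t)
  exact ((hf.differentiable (by simp) (θ, t)).hasFDerivAt).comp_hasDerivAt t h1

lemma hasDerivAt_slice_θ (f : ℝ → ℝ → ℝ) (hf : ContDiff ℝ (⊤ : ℕ∞) (fun p : ℝ × ℝ => f p.1 p.2))
    (θ t : ℝ) :
    HasDerivAt (fun a => f a t) (fderiv ℝ (fun p : ℝ × ℝ => f p.1 p.2) (θ, t) (1, 0)) θ := by
  have h1 : HasDerivAt (fun a : ℝ => ((a, t) : ℝ × ℝ)) (1, 0) θ :=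
    (hasDerivAt_id θ).prodMk (hasDerivAt_const θ t)
  exact ((hf.differentiable (by simp) (θ, t)).hasFDerivAt).comp_hasDerivAt θ h1

lemma pt_eq' (f : ℝ → ℝ → ℝ) (hf : ContDiff ℝ (⊤ : ℕ∞) (fun p : ℝ × ℝ => f p.1 p.2)) (θ t : ℝ) :
    pt f θ t = fderiv ℝ (fun p : ℝ × ℝ => f p.1 p.2) (θ, t) (0, 1) :=
  (hasDerivAt_slice_t f hf θ t).deriv

lemma pθ_eq' (f : ℝ → ℝ → ℝ) (hf : ContDiff ℝ (⊤ : ℕ∞) (fun p : ℝ × ℝ => f p.1 p.2)) (θ t : ℝ) :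
    pθ f θ t = fderiv ℝ (fun p : ℝ × ℝ => f p.1 p.2) (θ, t) (1, 0) :=
  (hasDerivAt_slice_θ f hf θ t).deriv

lemma pt_smooth (f : ℝ → ℝ → ℝ) (hf : ContDiff ℝ (⊤ : ℕ∞) (fun p : ℝ × ℝ => f p.1 p.2)) :
    ContDiff ℝ (⊤ : ℕ∞) (fun p : ℝ × ℝ => pt f p.1 p.2) := by
  have : (fun p : ℝ × ℝ => pt f p.1 p.2)
      = fun p : ℝ × ℝ => fderiv ℝ (fun q : ℝ × ℝ => f q.1 q.2) p ((0 : ℝ), (1 : ℝ)) := by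
    funext p; exact pt_eq' f hf p.1 p.2
  rw [this]
  exact (hf.fderiv_right (by simp)).clm_apply contDiff_const

lemma pθ_smooth (f : ℝ → ℝ → ℝ) (hf : ContDiff ℝ (⊤ : ℕ∞) (fun p : ℝ × ℝ => f p.1 p.2)) :
    ContDiff ℝ (⊤ : ℕ∞) (fun p : ℝ × ℝ => pθ f p.1 p.2) := by
  have : (fun p : ℝ × ℝ => pθ f p.1 p.2)
      = fun p : ℝ × ℝ => fderiv ℝ (fun q : ℝ × ℝ => f q.1 q.2) p ((1 : ℝ), (0 : ℝ)) := by
    funext p; exact pθ_eq' f hf p.1 p.2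
  rw [this]
  exact (hf.fderiv_right (by simp)).clm_apply contDiff_const

lemma pt_sub (S₁ S₂ ω : ℝ → ℝ → ℝ)
    (h₁ : ContDiff ℝ (⊤ : ℕ∞) (fun p : ℝ × ℝ => S₁ p.1 p.2))
    (h₂ : ContDiff ℝ (⊤ : ℕ∞) (fun p : ℝ × ℝ => S₂ p.1 p.2))
    (hω : ∀ θ t, ω θ t = S₂ θ t - S₁ θ t) :
    ∀ θ t, pt ω θ t = pt S₂ θ t - pt S₁ θ t := by
  intro θ t
  have : (fun b => ω θ b) = fun b => S₂ θ b - S₁ θ b := funext fun b => hω θ b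
  simp only [pt, this]
  rw [deriv_fun_sub (hasDerivAt_slice_t S₂ h₂ θ t).differentiableAt
    (hasDerivAt_slice_t S₁ h₁ θ t).differentiableAt]

lemma pθ_sub (S₁ S₂ ω : ℝ → ℝ → ℝ)
    (h₁ : ContDiff ℝ (⊤ : ℕ∞) (fun p : ℝ × ℝ => S₁ p.1 p.2))
    (h₂ : ContDiff ℝ (⊤ : ℕ∞) (fun p : ℝ × ℝ => S₂ p.1 p.2))
    (hω : ∀ θ t, ω θ t = S₂ θ t - S₁ θ t) :
    ∀ θ t, pθ ω θ t = pθ S₂ θ t - pθ S₁ θ t := by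
  intro θ t
  have : (fun a => ω a t) = fun a => S₂ a t - S₁ a t := funext fun a => hω a t
  simp only [pθ, this]
  rw [deriv_fun_sub (hasDerivAt_slice_θ S₂ h₂ θ t).differentiableAt
    (hasDerivAt_slice_θ S₁ h₁ θ t).differentiableAt]

/-- If `S₁, S₂` are two solutions of the support-function equation
`S_tt = k S_θt² + k⁻¹` with `k_i = (S_i + S_{i,θθ})⁻¹ > 0`, then `ω = S₂ - S₁`
satisfies the linear hyperbolic equation with coefficients
`a = k₁k₂(1/(k₁k₂) - S₁θt S₂θt)`, `2b = k₁S₁θt + k₂S₂θt`, `c = -1`, and the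
discriminant satisfies `b² - ac = ¼(k₁S₁θt - k₂S₂θt)² + 1 > 0`. -/
theorem stmt_13 (S₁ S₂ k₁ k₂ : ℝ → ℝ → ℝ)
    (hS₁ : ContDiff ℝ (⊤ : ℕ∞) (fun p : ℝ × ℝ => S₁ p.1 p.2))
    (hS₂ : ContDiff ℝ (⊤ : ℕ∞) (fun p : ℝ × ℝ => S₂ p.1 p.2))
    (hconv₁ : ∀ θ t, 0 < S₁ θ t + pθ (pθ S₁) θ t)
    (hconv₂ : ∀ θ t, 0 < S₂ θ t + pθ (pθ S₂) θ t)
    (hk₁ : ∀ θ t, k₁ θ t = (S₁ θ t + pθ (pθ S₁) θ t)⁻¹)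
    (hk₂ : ∀ θ t, k₂ θ t = (S₂ θ t + pθ (pθ S₂) θ t)⁻¹)
    (hPDE₁ : ∀ θ t, pt (pt S₁) θ t = k₁ θ t * (pt (pθ S₁) θ t) ^ 2 + (k₁ θ t)⁻¹)
    (hPDE₂ : ∀ θ t, pt (pt S₂) θ t = k₂ θ t * (pt (pθ S₂) θ t) ^ 2 + (k₂ θ t)⁻¹)
    (ω : ℝ → ℝ → ℝ) (hω : ∀ θ t, ω θ t = S₂ θ t - S₁ θ t) :
    ∀ θ t : ℝ,
      pt (pt ω) θ t =
        k₁ θ t * k₂ θ t * ((k₁ θ t * k₂ θ t)⁻¹ - pt (pθ S₁) θ t * pt (pθ S₂) θ t)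
            * pθ (pθ ω) θ t
          + (k₁ θ t * pt (pθ S₁) θ t + k₂ θ t * pt (pθ S₂) θ t) * pt (pθ ω) θ t
          + k₁ θ t * k₂ θ t * ((k₁ θ t * k₂ θ t)⁻¹ - pt (pθ S₁) θ t * pt (pθ S₂) θ t)
            * ω θ t ∧
      ((1 / 2) * (k₁ θ t * pt (pθ S₁) θ t + k₂ θ t * pt (pθ S₂) θ t)) ^ 2
          - (k₁ θ t * k₂ θ t * ((k₁ θ t * k₂ θ t)⁻¹ - pt (pθ S₁) θ t * pt (pθ S₂) θ t))
            * (-1)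
        = (1 / 4) * (k₁ θ t * pt (pθ S₁) θ t - k₂ θ t * pt (pθ S₂) θ t) ^ 2 + 1 ∧
      0 < ((1 / 2) * (k₁ θ t * pt (pθ S₁) θ t + k₂ θ t * pt (pθ S₂) θ t)) ^ 2
          - (k₁ θ t * k₂ θ t * ((k₁ θ t * k₂ θ t)⁻¹ - pt (pθ S₁) θ t * pt (pθ S₂) θ t))
            * (-1) := by
  intro θ t
  have hptω := pt_sub S₁ S₂ ω hS₁ hS₂ hω
  have hpθω := pθ_sub S₁ S₂ ω hS₁ hS₂ hω
  have hptptω := pt_sub (pt S₁) (pt S₂) (pt ω) (pt_smooth S₁ hS₁) (pt_smooth S₂ hS₂) hptω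
  have hptpθω := pt_sub (pθ S₁) (pθ S₂) (pθ ω) (pθ_smooth S₁ hS₁) (pθ_smooth S₂ hS₂) hpθω
  have hpθpθω := pθ_sub (pθ S₁) (pθ S₂) (pθ ω) (pθ_smooth S₁ hS₁) (pθ_smooth S₂ hS₂) hpθω
  have hk1pos : 0 < k₁ θ t := by rw [hk₁]; exact inv_pos.2 (hconv₁ θ t)
  have hk2pos : 0 < k₂ θ t := by rw [hk₂]; exact inv_pos.2 (hconv₂ θ t)
  have hk1ne : k₁ θ t ≠ 0 := ne_of_gt hk1pos
  have hk2ne : k₂ θ t ≠ 0 := ne_of_gt hk2pos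
  have hinv₁ : pθ (pθ S₁) θ t = (k₁ θ t)⁻¹ - S₁ θ t := by
    rw [hk₁, inv_inv]; ring
  have hinv₂ : pθ (pθ S₂) θ t = (k₂ θ t)⁻¹ - S₂ θ t := by
    rw [hk₂, inv_inv]; ring
  refine ⟨?_, by field_simp; ring, ?_⟩
  · rw [hptptω θ t, hpθpθω θ t, hptpθω θ t, hPDE₁ θ t, hPDE₂ θ t, hinv₁, hinv₂, hω θ t]
    field_simp
    ring
  · have : ((1 / 2) * (k₁ θ t * pt (pθ S₁) θ t + k₂ θ t * pt (pθ S₂) θ t)) ^ 2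
        - (k₁ θ t * k₂ θ t * ((k₁ θ t * k₂ θ t)⁻¹ - pt (pθ S₁) θ t * pt (pθ S₂) θ t)) * (-1)
        = (1 / 4) * (k₁ θ t * pt (pθ S₁) θ t - k₂ θ t * pt (pθ S₂) θ t) ^ 2 + 1 := by
      field_simp; ring
    rw [this]
    positivity
end

section
/- Let S(θ,t) be the support function of a family of strictly convex closed plane curves satisfying S_{tt} = k S_{θt}² + k⁻¹ with k = (S+S_{θθ})⁻¹ > 0, and let L(t) = ∫₀^{2π}(S + S_{θθ}) dθ = ∫₀^{2π} S dθ be the arclength. Then d²L/dt² = ∫₀^{2π} [k (σ̃_θ)² + k⁻¹] dθ > 0, where σ̃ = S_t; in particular L is strictly convex in t. -/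
namespace Stmt16Aux

open MeasureTheory intervalIntegral Metric Set

lemma hasDerivAt_snd {F : ℝ × ℝ → ℝ} (hF : Differentiable ℝ F) (θ x : ℝ) :
    HasDerivAt (fun b => F (θ, b)) (fderiv ℝ F (θ, x) (0, 1)) x := by
  have h1 : HasDerivAt (fun b : ℝ => ((θ : ℝ), b)) ((0 : ℝ), (1 : ℝ)) x :=
    (hasDerivAt_const x θ).prodMk (hasDerivAt_id x)
  exact (hF (θ, x)).hasFDerivAt.comp_hasDerivAt x h1

lemma hasDerivAt_fst {F : ℝ × ℝ → ℝ} (hF : Differentiable ℝ F) (θ x : ℝ) :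
    HasDerivAt (fun a => F (a, x)) (fderiv ℝ F (θ, x) (1, 0)) θ := by
  have h1 : HasDerivAt (fun a : ℝ => (a, (x : ℝ))) ((1 : ℝ), (0 : ℝ)) θ :=
    (hasDerivAt_id θ).prodMk (hasDerivAt_const θ x)
  exact (hF (θ, x)).hasFDerivAt.comp_hasDerivAt θ h1

lemma pt_eq {f : ℝ → ℝ → ℝ} (hf : Differentiable ℝ (fun p : ℝ × ℝ => f p.1 p.2)) (θ x : ℝ) :
    pt f θ x = fderiv ℝ (fun p : ℝ × ℝ => f p.1 p.2) (θ, x) (0, 1) :=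
  (hasDerivAt_snd hf θ x).deriv

lemma pθ_eq {f : ℝ → ℝ → ℝ} (hf : Differentiable ℝ (fun p : ℝ × ℝ => f p.1 p.2)) (θ x : ℝ) :
    pθ f θ x = fderiv ℝ (fun p : ℝ × ℝ => f p.1 p.2) (θ, x) (1, 0) :=
  (hasDerivAt_fst hf θ x).deriv

lemma smooth_D {F : ℝ × ℝ → ℝ} (hF : ContDiff ℝ (⊤ : ℕ∞) F) (v : ℝ × ℝ) :
    ContDiff ℝ (⊤ : ℕ∞) (fun p => fderiv ℝ F p v) :=
  (hF.fderiv_right (by simp)).clm_apply contDiff_const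

lemma clairaut {F : ℝ × ℝ → ℝ} (hF : ContDiff ℝ (⊤ : ℕ∞) F) (p : ℝ × ℝ) (v w : ℝ × ℝ) :
    fderiv ℝ (fun q => fderiv ℝ F q v) p w = fderiv ℝ (fun q => fderiv ℝ F q w) p v := by
  have hd : Differentiable ℝ (fderiv ℝ F) :=
    (hF.fderiv_right (m := (⊤ : ℕ∞)) ((by simp))).differentiable (by simp)
  have hsym := second_derivative_symmetric (f := F) (f' := fderiv ℝ F)
      (f'' := fderiv ℝ (fderiv ℝ F) p) (x := p)
      (fun y => (hF.differentiable (by simp) y).hasFDerivAt) (hd p).hasFDerivAt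
  have ev : ∀ u z : ℝ × ℝ, fderiv ℝ (fun q => fderiv ℝ F q u) z
      = ((fderiv ℝ (fderiv ℝ F) z).flip u) := by
    intro u z
    have := fderiv_clm_apply (c := fderiv ℝ F) (u := fun _ => u) (hd z)
      (differentiableAt_const u)
    simpa [fderiv_const] using this
  rw [ev v p, ev w p]
  simpa using hsym w v

/-- Differentiation under the interval integral for a smooth integrand. -/
lemma key {F : ℝ × ℝ → ℝ} (hF : ContDiff ℝ (⊤ : ℕ∞) F) (a b t : ℝ) :
    HasDerivAt (fun x => ∫ θ in a..b, F (θ, x))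
      (∫ θ in a..b, fderiv ℝ F (θ, t) (0, 1)) t := by
  set F' : ℝ → ℝ → ℝ := fun x θ => fderiv ℝ F (θ, x) (0, 1) with hF'
  have hcontF : Continuous F := hF.continuous
  have hcontF' : Continuous (fun p : ℝ × ℝ => fderiv ℝ F p (0, 1)) :=
    (smooth_D hF (0, 1)).continuous
  -- bound on compact set
  obtain ⟨M, hM⟩ : ∃ M, ∀ p ∈ (uIcc a b ×ˢ Icc (t - 1) (t + 1) : Set (ℝ × ℝ)),
      ‖fderiv ℝ F p (0, 1)‖ ≤ M :=
    (isCompact_uIcc.prod isCompact_Icc).exists_bound_of_continuousOn hcontF'.continuousOn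
  have := intervalIntegral.hasDerivAt_integral_of_dominated_loc_of_deriv_le
    (F := fun x θ => F (θ, x)) (F' := F') (x₀ := t) (a := a) (b := b)
    (bound := fun _ => M) (μ := volume) (s := ball t 1) (ball_mem_nhds t one_pos)
    (Filter.Eventually.of_forall fun x =>
      ((hcontF.comp (continuous_id.prodMk continuous_const)).aestronglyMeasurable))
    ((hcontF.comp (continuous_id.prodMk continuous_const)).intervalIntegrable a b)
    ((hcontF'.comp (continuous_id.prodMk continuous_const)).aestronglyMeasurable)
    (Filter.Eventually.of_forall fun θ hθ x hx => by
      refine hM (θ, x) ⟨?_, ?_⟩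
      · exact uIoc_subset_uIcc hθ
      · have := abs_lt.1 (by simpa [Real.dist_eq] using mem_ball.1 hx)
        constructor <;> linarith [this.1, this.2])
    (intervalIntegrable_const)
    (Filter.Eventually.of_forall fun θ _ x _ =>
      hasDerivAt_snd (hF.differentiable (by simp)) θ x)
  exact this.2

end Stmt16Aux

/-- For the support function `S` of a family of strictly convex closed plane
curves (`2π`-periodic in `θ`), satisfying `S_tt = k S_θt² + k⁻¹` with
`k = (S + S_θθ)⁻¹ > 0`, the arclength `L(t) = ∫₀^{2π} S dθ` satisfies
`d²L/dt² = ∫₀^{2π} [k (σ̃_θ)² + k⁻¹] dθ > 0`, where `σ̃ = S_t`. -/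
theorem stmt_16 (S k : ℝ → ℝ → ℝ)
    (hS : ContDiff ℝ (⊤ : ℕ∞) (fun p : ℝ × ℝ => S p.1 p.2))
    (hper : ∀ θ t, S (θ + 2 * Real.pi) t = S θ t)
    (hconv : ∀ θ t, 0 < S θ t + pθ (pθ S) θ t)
    (hk : ∀ θ t, k θ t = (S θ t + pθ (pθ S) θ t)⁻¹)
    (hPDE : ∀ θ t, pt (pt S) θ t = k θ t * (pt (pθ S) θ t) ^ 2 + (k θ t)⁻¹)
    (L : ℝ → ℝ) (hL : ∀ t, L t = ∫ θ in (0 : ℝ)..(2 * Real.pi), S θ t) :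
    ∀ t : ℝ,
      deriv (deriv L) t =
        ∫ θ in (0 : ℝ)..(2 * Real.pi), (k θ t * (pθ (pt S) θ t) ^ 2 + (k θ t)⁻¹) ∧
      0 < deriv (deriv L) t := by
  intro t
  open Stmt16Aux in
  set F : ℝ × ℝ → ℝ := fun p => S p.1 p.2 with hFdef
  set G : ℝ × ℝ → ℝ := fun p => fderiv ℝ F p (0, 1) with hGdef
  have hG : ContDiff ℝ (⊤ : ℕ∞) G := Stmt16Aux.smooth_D hS (0, 1)
  -- pt S as a curried function equals G
  have hptS : ∀ θ x, pt S θ x = G (θ, x) := fun θ x =>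
    Stmt16Aux.pt_eq (hS.differentiable (by simp)) θ x
  -- first derivative of L
  have hL1 : deriv L = fun x => ∫ θ in (0 : ℝ)..(2 * Real.pi), G (θ, x) := by
    funext x
    have : L = fun x => ∫ θ in (0 : ℝ)..(2 * Real.pi), F (θ, x) := funext fun x => hL x
    rw [this]
    exact (Stmt16Aux.key hS 0 (2 * Real.pi) x).deriv
  -- second derivative
  have hL2 : deriv (deriv L) t
      = ∫ θ in (0 : ℝ)..(2 * Real.pi), fderiv ℝ G (θ, t) (0, 1) := by
    rw [hL1]
    exact (Stmt16Aux.key hG 0 (2 * Real.pi) t).deriv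
  -- identify fderiv G with pt (pt S)
  have hptptS : ∀ θ x, pt (pt S) θ x = fderiv ℝ G (θ, x) (0, 1) := by
    intro θ x
    have h1 : (fun p : ℝ × ℝ => pt S p.1 p.2) = G := funext fun p => hptS p.1 p.2
    have := Stmt16Aux.pt_eq (f := pt S) (by rw [h1]; exact hG.differentiable (by simp)) θ x
    rw [this, h1]
  -- Clairaut: pθ (pt S) = pt (pθ S)
  have hmixed : ∀ θ x, pθ (pt S) θ x = pt (pθ S) θ x := by
    intro θ x
    have h1 : (fun p : ℝ × ℝ => pt S p.1 p.2) = G := funext fun p => hptS p.1 p.2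
    have hθS : ∀ a b, pθ S a b = fderiv ℝ F (a, b) (1, 0) := fun a b =>
      Stmt16Aux.pθ_eq (hS.differentiable (by simp)) a b
    have h2 : (fun p : ℝ × ℝ => pθ S p.1 p.2) = (fun p => fderiv ℝ F p (1, 0)) :=
      funext fun p => hθS p.1 p.2
    have e1 : pθ (pt S) θ x = fderiv ℝ G (θ, x) (1, 0) := by
      have := Stmt16Aux.pθ_eq (f := pt S) (by rw [h1]; exact hG.differentiable (by simp)) θ x
      rw [this, h1]
    have e2 : pt (pθ S) θ x = fderiv ℝ (fun p => fderiv ℝ F p (1, 0)) (θ, x) (0, 1) := by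
      have := Stmt16Aux.pt_eq (f := pθ S)
        (by rw [h2]; exact (Stmt16Aux.smooth_D hS (1, 0)).differentiable (by simp)) θ x
      rw [this, h2]
    rw [e1, e2, hGdef]
    exact Stmt16Aux.clairaut hS (θ, x) (0, 1) (1, 0)
  -- the integrand equals pt (pt S)
  have hint : ∀ θ, k θ t * (pθ (pt S) θ t) ^ 2 + (k θ t)⁻¹ = fderiv ℝ G (θ, t) (0, 1) := by
    intro θ
    rw [hmixed, ← hPDE, hptptS]
  have hkpos : ∀ θ, 0 < k θ t := fun θ => by
    rw [hk]; exact inv_pos.2 (hconv θ t)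
  constructor
  · rw [hL2]
    exact intervalIntegral.integral_congr fun θ _ => (hint θ).symm
  · rw [hL2]
    have hcont : Continuous fun θ => fderiv ℝ G (θ, t) (0, 1) :=
      (Stmt16Aux.smooth_D hG (0, 1)).continuous.comp
        (continuous_id.prodMk continuous_const)
    refine intervalIntegral.intervalIntegral_pos_of_pos_on
      (hcont.intervalIntegrable 0 (2 * Real.pi)) (fun θ _ => ?_) Real.two_pi_pos
    rw [← hint θ]
    have h1 : 0 ≤ k θ t * (pθ (pt S) θ t) ^ 2 := mul_nonneg (hkpos θ).le (sq_nonneg _)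
    have h2 : 0 < (k θ t)⁻¹ := inv_pos.2 (hkpos θ)
    linarith
end
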